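/- arXiv:1412.5721 — 3 statements merged into one kernel-verified Lean document; each statement's English description precedes it below -/
import Mathlib

section
/- Let C be the (random) final set of centers produced by the semi-online k-means algorithm run on input v_1,…,v_n with parameters k and w*, and let W* denote the optimal k-means cost of v_1,…,v_n with k clusters. If 0 < w* ≤ W*, then there is a universal constant c₀ (independent of n, k, d, the input vectors, and w*) such that the expected number of centers satisfies E[|C|] ≤ c₀ · k · (1 + log₂ n) · (1 + log₂(W*/w*)). -/
open scoped ENNReal

/-- Points of `ℝ^d`. -/
abbrev Pt (d : ℕ) := EuclideanSpace ℝ (Fin d)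

/-- `D²(v, C)`: squared Euclidean distance from `v` to the nearest center in the
list `C` (its value on the empty list is irrelevant: the algorithm opens a cluster
with probability 1 when `C` is empty). -/
noncomputable def D2 {d : ℕ} (v : Pt d) (C : List (Pt d)) : ℝ :=
  sInf {x | ∃ c ∈ C, x = ‖v - c‖ ^ 2}

/-- State of the semi-online `k`-means algorithm: current centers `C`, per-phase
counter `q`, current facility cost `f`, and accumulated online service cost `cost`. -/
structure SemiState (d : ℕ) where
  C : List (Pt d)
  q : ℕ
  f : ℝ
  cost : ℝ

/-- Probability of opening a new cluster at `v`: `min(D²(v,C)/f, 1)`, which is `1`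
when `C` is empty (`D(v,∅) = ∞`). -/
noncomputable def openProb {d : ℕ} (v : Pt d) (C : List (Pt d)) (f : ℝ) : ℝ≥0∞ :=
  match C with
  | [] => 1
  | _ :: _ => ENNReal.ofReal (min (D2 v C / f) 1)

lemma openProb_le_one {d : ℕ} (v : Pt d) (C : List (Pt d)) (f : ℝ) :
    openProb v C f ≤ 1 := by
  cases C with
  | nil => exact le_rfl
  | cons a l => exact ENNReal.ofReal_le_one.mpr (min_le_right _ _)

/-- One step of the semi-online algorithm on point `v`, with phase threshold `Q`
(`= 3k(1+log₂ n)`): with probability `min(D²(v,C)/f, 1)` the point `v` is added as a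
new center and the counter `q` incremented (starting a new phase, resetting `q` and
doubling `f`, if the threshold is reached); otherwise `v` is served by its nearest
current center, incurring cost `D²(v,C)`. -/
noncomputable def semiStep {d : ℕ} (Q : ℝ) (v : Pt d) (s : SemiState d) :
    PMF (SemiState d) :=
  (PMF.bernoulli (openProb v s.C s.f).toNNReal
      (by simpa using ENNReal.toNNReal_mono ENNReal.one_ne_top (openProb_le_one v s.C s.f))).bind fun b =>
    PMF.pure <|
      if b then
        if Q ≤ (s.q : ℝ) + 1 then
          { C := s.C ++ [v], q := 0, f := 2 * s.f, cost := s.cost }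
        else
          { C := s.C ++ [v], q := s.q + 1, f := s.f, cost := s.cost }
      else
        { s with cost := s.cost + D2 v s.C }

/-- The distribution over final states of the semi-online `k`-means algorithm on the
stream `vs`, with parameters `k`, `n`, `w*`: initial facility cost `w*/(k·log₂ n)`
and phase threshold `3k(1+log₂ n)`. -/
noncomputable def semiRun {d : ℕ} (k n : ℕ) (wstar : ℝ) (vs : List (Pt d)) :
    PMF (SemiState d) :=
  vs.foldlM (fun s v => semiStep (3 * (k : ℝ) * (1 + Real.logb 2 n)) v s)
    { C := [], q := 0, f := wstar / ((k : ℝ) * Real.logb 2 n), cost := 0 }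

/-- Expected number of centers of a (random) final state. -/
noncomputable def expectedCenters {d : ℕ} (μ : PMF (SemiState d)) : ℝ≥0∞ :=
  ∑' s, μ s * (s.C.length : ℝ≥0∞)

/-- The optimal `k`-means cost `W*` of the points `v 0, …, v (n-1)`: the infimum, over
assignments `σ` of the points into `k` clusters and centers `c`, of the total squared
distance of each point to the center of its cluster. -/
noncomputable def kMeansOpt {d : ℕ} (k : ℕ) {n : ℕ} (v : Fin n → Pt d) : ℝ :=
  sInf {w | ∃ (σ : Fin n → Fin k) (c : Fin k → Pt d),
    w = ∑ t, ‖v t - c (σ t)‖ ^ 2}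

/-!
Fix a clustering of cost `W ≤ 2 W*` and sort the input points by their nearest center and by the
dyadic ring `(W / 2 ^ (j + 1), W / 2 ^ j]` of their squared distance `a(x)` to it, with one last
ring for all distances below `W / 2 ^ (L + 1)`, where `n ≤ 2 ^ L`. Every opened center is paid
for from one of three budgets: the first `r` phases, which allow `⌈3k(1 + log₂ n)⌉` opens each;
the first open in each of the `k (L + 2)` rings; or, once the facility cost is at least
`f₁ 2 ^ r`, the opening probability itself. In the last case an earlier center shares the ring
of `x`, so `D²(x, C) ≤ 6 a(x) + 2 W / 2 ^ (L + 1)`, and these probabilities sum to at most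
`7 W / (f₁ 2 ^ r)`, which is `O(k log₂ n)` for `2 ^ r ≈ 8 W / w*`. The budgets form a potential
whose expectation grows by at most the opening probability of the third kind at each step.
-/

open Finset

namespace PMF

variable {α β : Type*}

lemma tsum_pure_mul (a : α) (g : α → ℝ≥0∞) : ∑' b, pure a b * g b = g a := by
  rw [tsum_eq_single a fun b hb => by rw [pure_apply_of_ne _ _ hb, zero_mul], pure_apply_self,
    one_mul]

lemma tsum_bind_mul (p : PMF α) (f : α → PMF β) (g : β → ℝ≥0∞) :
    ∑' b, p.bind f b * g b = ∑' a, p a * ∑' b, f a b * g b := by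
  simp only [bind_apply, ← ENNReal.tsum_mul_right, ← ENNReal.tsum_mul_left, mul_assoc]
  exact ENNReal.tsum_comm

lemma tsum_mul_add_const (p : PMF α) (g : α → ℝ≥0∞) (c : ℝ≥0∞) :
    ∑' a, p a * (g a + c) = ∑' a, p a * g a + c := by
  simp only [mul_add, ENNReal.tsum_add, ENNReal.tsum_mul_right, tsum_coe, one_mul]

set_option linter.deprecated false in
lemma tsum_bernoulli_bind_pure_mul (p : ℝ≥0∞) (hp : p.toNNReal ≤ 1) (h : Bool → α)
    (g : α → ℝ≥0∞) (hp_top : p ≠ ⊤) :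
    ∑' a, (bernoulli p.toNNReal hp).bind (fun b => pure (h b)) a * g a
      = (1 - p) * g (h false) + p * g (h true) := by
  rw [tsum_bind_mul, tsum_bool]
  simp [bernoulli_apply, ENNReal.coe_sub, ENNReal.coe_toNNReal hp_top]

theorem tsum_foldlM_mul_le {σ : Type*} (step : σ → α → PMF σ) (Inv : σ → Prop)
    (G : σ → ℝ≥0∞) (pay : α → ℝ≥0∞) (l : List α)
    (h_inv : ∀ x ∈ l, ∀ s, Inv s → ∀ t ∈ (step s x).support, Inv t)
    (h_step : ∀ x ∈ l, ∀ s, Inv s → ∑' t, step s x t * G t ≤ G s + pay x)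
    (s : σ) (hs : Inv s) :
    ∑' t, l.foldlM step s t * G t ≤ G s + (l.map pay).sum := by
  induction l generalizing s with
  | nil =>
    simp only [List.foldlM_nil, List.map_nil, List.sum_nil, add_zero]
    exact (tsum_pure_mul s G).le
  | cons x l ih =>
    have ih' := ih (fun y hy => h_inv y (List.mem_cons_of_mem x hy))
      (fun y hy => h_step y (List.mem_cons_of_mem x hy))
    calc ∑' t, (x :: l).foldlM step s t * G t
        = ∑' t, step s x t * ∑' u, l.foldlM step t u * G u := tsum_bind_mul _ _ _
      _ ≤ ∑' t, step s x t * (G t + (l.map pay).sum) := by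
        refine ENNReal.tsum_le_tsum fun t => ?_
        by_cases ht : t ∈ (step s x).support
        · exact mul_le_mul_right (ih' t (h_inv x List.mem_cons_self s hs t ht)) _
        · rw [(mem_support_iff _ _).not_left.mp ht, zero_mul, zero_mul]
      _ = ∑' t, step s x t * G t + (l.map pay).sum := tsum_mul_add_const _ _ _
      _ ≤ G s + pay x + (l.map pay).sum := add_le_add_left (h_step x List.mem_cons_self s hs) _
      _ = G s + ((x :: l).map pay).sum := by rw [List.map_cons, List.sum_cons, add_assoc]

end PMF

lemma ENNReal.one_sub_mul_add_mul_le {p G G' pay : ℝ≥0∞} (hp : p ≤ 1) (hG' : G' ≤ G + 1)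
    (h : G' ≤ G ∨ p ≤ pay) : (1 - p) * G + p * G' ≤ G + pay := by
  rcases h with h | h
  · calc (1 - p) * G + p * G' ≤ (1 - p) * G + p * G := by gcongr
      _ = G := by rw [← add_mul, tsub_add_cancel_of_le hp, one_mul]
      _ ≤ G + pay := le_self_add
  · calc (1 - p) * G + p * G' ≤ (1 - p) * G + p * (G + 1) := by gcongr
      _ = G + p := by rw [mul_add, mul_one, ← add_assoc, ← add_mul, tsub_add_cancel_of_le hp,
            one_mul]
      _ ≤ G + pay := by gcongr

lemma card_filter_range_mul_two_pow_le {f₁ : ℝ} (hf₁ : 0 < f₁) (r e : ℕ) :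
    #{i ∈ range r | f₁ * 2 ^ e ≤ f₁ * 2 ^ i} = r - e := by
  simp_rw [mul_le_mul_iff_right₀ hf₁, pow_le_pow_iff_right₀ (one_lt_two : (1 : ℝ) < 2)]
  rw [← Nat.card_Ico]
  congr 1
  ext i
  simp [and_comm]

section Algorithm

variable {d : ℕ}

lemma D2_le_norm_sub_sq {v u : Pt d} {C : List (Pt d)} (hu : u ∈ C) : D2 v C ≤ ‖v - u‖ ^ 2 :=
  csInf_le ⟨0, fun _ ⟨_, _, hx⟩ => hx ▸ sq_nonneg _⟩ ⟨u, hu, rfl⟩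

lemma openProb_le_ofReal_D2_div {v : Pt d} {C : List (Pt d)} (hC : C ≠ []) (f : ℝ) :
    openProb v C f ≤ ENNReal.ofReal (D2 v C / f) := by
  cases C with
  | nil => exact absurd rfl hC
  | cons a l => exact ENNReal.ofReal_le_ofReal (min_le_left _ _)

noncomputable def SemiState.afterServe (x : Pt d) (s : SemiState d) : SemiState d :=
  { s with cost := s.cost + D2 x s.C }

noncomputable def SemiState.afterOpen (Q : ℝ) (x : Pt d) (s : SemiState d) : SemiState d :=
  if Q ≤ (s.q : ℝ) + 1 then { C := s.C ++ [x], q := 0, f := 2 * s.f, cost := s.cost }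
  else { C := s.C ++ [x], q := s.q + 1, f := s.f, cost := s.cost }

lemma SemiState.afterOpen_C (Q : ℝ) (x : Pt d) (s : SemiState d) :
    (s.afterOpen Q x).C = s.C ++ [x] := by
  unfold afterOpen; split_ifs <;> rfl

set_option linter.deprecated false in
lemma tsum_semiStep_mul (Q : ℝ) (x : Pt d) (s : SemiState d) (g : SemiState d → ℝ≥0∞) :
    ∑' t, semiStep Q x s t * g t
      = (1 - openProb x s.C s.f) * g (s.afterServe x) + openProb x s.C s.f * g (s.afterOpen Q x) :=
  PMF.tsum_bernoulli_bind_pure_mul _ _ (fun b => if b then s.afterOpen Q x else s.afterServe x) g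
    (ne_top_of_le_ne_top ENNReal.one_ne_top (openProb_le_one x s.C s.f))

lemma mem_support_semiStep {Q : ℝ} {x : Pt d} {s t : SemiState d}
    (ht : t ∈ (semiStep Q x s).support) : t = s.afterServe x ∨ t = s.afterOpen Q x := by
  simp only [semiStep, PMF.support_bind, PMF.support_pure, Set.mem_iUnion,
    Set.mem_singleton_iff] at ht
  obtain ⟨b, -, rfl⟩ := ht
  cases b
  · exact Or.inl rfl
  · exact Or.inr rfl

def SemiState.IsValid (f₁ : ℝ) (QC : ℕ) (S : Set (Pt d)) (s : SemiState d) : Prop :=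
  (∃ e : ℕ, s.f = f₁ * 2 ^ e) ∧ s.q < QC ∧ ∀ u ∈ s.C, u ∈ S

variable {f₁ Q : ℝ} {QC : ℕ} {S : Set (Pt d)} {x : Pt d} {s : SemiState d}

lemma SemiState.IsValid.afterOpen (hs : s.IsValid f₁ QC S) (hQ : Q ≤ QC) (hQC : 0 < QC)
    (hx : x ∈ S) : (s.afterOpen Q x).IsValid f₁ QC S := by
  obtain ⟨⟨e, hf⟩, hq, hC⟩ := hs
  have hC' : ∀ u ∈ s.C ++ [x], u ∈ S := by
    simpa [or_imp, forall_and, hx] using hC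
  unfold SemiState.afterOpen
  split_ifs with hsw
  · exact ⟨⟨e + 1, by rw [hf, pow_succ]; ring⟩, hQC, hC'⟩
  · have : (s.q : ℝ) + 1 < QC := (not_le.mp hsw).trans_le hQ
    exact ⟨⟨e, hf⟩, by exact_mod_cast this, hC'⟩

lemma SemiState.IsValid.of_mem_support_semiStep (hs : s.IsValid f₁ QC S) (hQ : Q ≤ QC)
    (hx : x ∈ S) {t : SemiState d} (ht : t ∈ (semiStep Q x s).support) : t.IsValid f₁ QC S := by
  rcases mem_support_semiStep ht with rfl | rfl
  · exact hs
  · exact hs.afterOpen hQ (by have := hs.2.1; omega) hx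

end Algorithm

section Potential

variable {d : ℕ} {κ : Type*} [DecidableEq κ]

lemma sdiff_toFinset_map_append_singleton (key : Pt d → κ) (K : Finset κ) (C : List (Pt d))
    (x : Pt d) :
    K \ ((C ++ [x]).map key).toFinset = (K \ (C.map key).toFinset).erase (key x) := by
  rw [List.map_append, List.toFinset_append, List.map_singleton, List.toFinset_cons,
    List.toFinset_nil, insert_empty_eq, union_singleton, sdiff_insert]

/-- The opens still allowed before the facility cost reaches `f₁ * 2 ^ r`. -/
noncomputable def remainingCheapOpens (f₁ : ℝ) (r QC : ℕ) (s : SemiState d) : ℕ :=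
  QC * #{i ∈ range r | s.f ≤ f₁ * 2 ^ i} - s.q

lemma remainingCheapOpens_afterOpen {f₁ Q : ℝ} {r QC e : ℕ} {x : Pt d} {s : SemiState d}
    (hf₁ : 0 < f₁) (hQ : Q ≤ QC) (hf : s.f = f₁ * 2 ^ e) (hq : s.q < QC) :
    remainingCheapOpens f₁ r QC (s.afterOpen Q x) ≤ remainingCheapOpens f₁ r QC s ∧
      (e < r → remainingCheapOpens f₁ r QC (s.afterOpen Q x) < remainingCheapOpens f₁ r QC s) := by
  unfold remainingCheapOpens SemiState.afterOpen
  split_ifs with hsw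
  · have hf' : 2 * (f₁ * 2 ^ e) = f₁ * 2 ^ (e + 1) := by rw [pow_succ]; ring
    simp only [hf, hf', card_filter_range_mul_two_pow_le hf₁]
    rcases lt_or_ge e r with he | he
    · obtain ⟨a, ha⟩ : ∃ a, r - e = a + 1 := ⟨r - e - 1, by omega⟩
      rw [ha, show r - (e + 1) = a by omega, Nat.mul_succ]
      omega
    · rw [Nat.sub_eq_zero_of_le he, Nat.sub_eq_zero_of_le (by omega : r ≤ e + 1)]
      omega
  · have : (s.q : ℝ) + 1 < QC := (not_le.mp hsw).trans_le hQ
    have hq' : s.q + 1 < QC := by exact_mod_cast this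
    simp only [hf, card_filter_range_mul_two_pow_le hf₁]
    refine ⟨by omega, fun he => ?_⟩
    have := Nat.le_mul_of_pos_right QC (Nat.sub_pos_of_lt he)
    omega

noncomputable def centerPotential (key : Pt d → κ) (K : Finset κ) (f₁ : ℝ) (r QC : ℕ)
    (s : SemiState d) : ℕ :=
  s.C.length + #(K \ (s.C.map key).toFinset) + remainingCheapOpens f₁ r QC s

variable {key : Pt d → κ} {K : Finset κ} {f₁ Q : ℝ} {r QC : ℕ} {S : Set (Pt d)}

lemma length_le_centerPotential (s : SemiState d) :
    s.C.length ≤ centerPotential key K f₁ r QC s :=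
  (Nat.le_add_right _ _).trans (Nat.le_add_right _ _)

lemma centerPotential_le (s : SemiState d) :
    centerPotential key K f₁ r QC s ≤ s.C.length + #K + QC * r := by
  have hU : #(K \ (s.C.map key).toFinset) ≤ #K := card_le_card sdiff_subset
  have hR : remainingCheapOpens f₁ r QC s ≤ QC * r :=
    (Nat.sub_le _ _).trans (Nat.mul_le_mul_left _ ((card_filter_le _ _).trans (card_range r).le))
  unfold centerPotential
  omega

lemma centerPotential_afterOpen {e : ℕ} {x : Pt d} {s : SemiState d} (hf₁ : 0 < f₁)
    (hQ : Q ≤ QC) (hf : s.f = f₁ * 2 ^ e) (hq : s.q < QC) :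
    centerPotential key K f₁ r QC (s.afterOpen Q x) ≤ centerPotential key K f₁ r QC s + 1 ∧
      (e < r ∨ key x ∈ K \ (s.C.map key).toFinset →
        centerPotential key K f₁ r QC (s.afterOpen Q x) ≤ centerPotential key K f₁ r QC s) := by
  obtain ⟨hle, hlt⟩ := remainingCheapOpens_afterOpen (r := r) (x := x) hf₁ hQ hf hq
  set U := K \ (s.C.map key).toFinset
  have hopen : centerPotential key K f₁ r QC (s.afterOpen Q x)
      = s.C.length + 1 + #(U.erase (key x)) + remainingCheapOpens f₁ r QC (s.afterOpen Q x) := by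
    simp only [centerPotential, SemiState.afterOpen_C, sdiff_toFinset_map_append_singleton,
      List.length_append, List.length_singleton, U]
  have hcur : centerPotential key K f₁ r QC s
      = s.C.length + #U + remainingCheapOpens f₁ r QC s := rfl
  have herase := card_erase_le (s := U) (a := key x)
  rw [hopen, hcur]
  refine ⟨by omega, fun hfree => ?_⟩
  rcases hfree with he | hU
  · have := hlt he; omega
  · have := card_erase_of_mem hU; have := card_pos.mpr ⟨_, hU⟩; omega

theorem tsum_semiStep_mul_centerPotential_le {x : Pt d} {s : SemiState d} {b : ℝ}
    (hf₁ : 0 < f₁) (hQ : Q ≤ QC) (hs : s.IsValid f₁ QC S) (hK : key x ∈ K)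
    (hkey : ∀ u ∈ S, key u = key x → ‖x - u‖ ^ 2 ≤ b) :
    ∑' t, semiStep Q x s t * (centerPotential key K f₁ r QC t : ℝ≥0∞)
      ≤ centerPotential key K f₁ r QC s + ENNReal.ofReal (b / (f₁ * 2 ^ r)) := by
  obtain ⟨⟨e, hf⟩, hq, hCS⟩ := hs
  obtain ⟨hle, hfree_le⟩ := centerPotential_afterOpen (key := key) (K := K) (r := r) (x := x)
    hf₁ hQ hf hq
  rw [tsum_semiStep_mul]
  refine ENNReal.one_sub_mul_add_mul_le (openProb_le_one _ _ _) (by exact_mod_cast hle) ?_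
  by_cases hfree : e < r ∨ key x ∈ K \ (s.C.map key).toFinset
  · exact Or.inl (by exact_mod_cast hfree_le hfree)
  push Not at hfree
  obtain ⟨u, hu, hux⟩ : ∃ u ∈ s.C, key u = key x := by simpa [hK] using hfree.2
  have hflow : f₁ * 2 ^ r ≤ s.f := by
    rw [hf]; gcongr; exacts [one_le_two, hfree.1]
  have hb : ‖x - u‖ ^ 2 ≤ b := hkey u (hCS u hu) hux
  refine Or.inr ((openProb_le_ofReal_D2_div (List.ne_nil_of_mem hu) _).trans ?_)
  gcongr
  · exact (sq_nonneg _).trans hb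
  · exact (D2_le_norm_sub_sq hu).trans hb

theorem tsum_foldlM_semiStep_mul_length_le (hf₁ : 0 < f₁) (hQ : Q ≤ QC) (b : Pt d → ℝ)
    (l : List (Pt d)) (hlS : ∀ x ∈ l, x ∈ S) (hK : ∀ x ∈ S, key x ∈ K)
    (hkey : ∀ u ∈ S, ∀ x ∈ S, key u = key x → ‖x - u‖ ^ 2 ≤ b x)
    (s : SemiState d) (hs : s.IsValid f₁ QC S) :
    ∑' t, l.foldlM (fun s v => semiStep Q v s) s t * (t.C.length : ℝ≥0∞)
      ≤ centerPotential key K f₁ r QC s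
        + (l.map fun x => ENNReal.ofReal (b x / (f₁ * 2 ^ r))).sum :=
  calc ∑' t, l.foldlM (fun s v => semiStep Q v s) s t * (t.C.length : ℝ≥0∞)
      ≤ ∑' t, l.foldlM (fun s v => semiStep Q v s) s t
          * (centerPotential key K f₁ r QC t : ℝ≥0∞) :=
        ENNReal.tsum_le_tsum fun t => by gcongr; exact length_le_centerPotential t
    _ ≤ _ := PMF.tsum_foldlM_mul_le _ (SemiState.IsValid f₁ QC S) _ _ l
        (fun x hx _ hs _ ht => hs.of_mem_support_semiStep hQ (hlS x hx) ht)
        (fun x hx _ hs => tsum_semiStep_mul_centerPotential_le hf₁ hQ hs (hK x (hlS x hx))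
          fun u hu => hkey u hu x (hlS x hx)) s hs

end Potential

section DyadicScale

open Classical in
/-- For `0 ≤ a ≤ W`, the index `j` of the dyadic ring `(W / 2 ^ (j + 1), W / 2 ^ j]` containing
`a`, where the last ring `[0, W / 2 ^ (L + 1)]` collects all small values. -/
noncomputable def dyadicScale (W : ℝ) (L : ℕ) (a : ℝ) : ℕ :=
  Nat.find (⟨L + 1, Or.inl rfl⟩ : ∃ j, j = L + 1 ∨ W / 2 ^ (j + 1) < a)

variable {W a b : ℝ} {L : ℕ}

lemma dyadicScale_le : dyadicScale W L a ≤ L + 1 :=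
  Nat.find_min' _ (Or.inl rfl)

lemma le_div_pow_dyadicScale (ha : a ≤ W) : a ≤ W / 2 ^ dyadicScale W L a := by
  classical
  rcases h : dyadicScale W L a with _ | j
  · simpa using ha
  · have := Nat.find_min (⟨L + 1, Or.inl rfl⟩ : ∃ j, j = L + 1 ∨ W / 2 ^ (j + 1) < a)
      (m := j) (by unfold dyadicScale at h; omega)
    push Not at this
    exact this.2

lemma le_two_mul_add_of_dyadicScale_eq (hW : 0 ≤ W) (ha : 0 ≤ a) (hb : b ≤ W)
    (h : dyadicScale W L b = dyadicScale W L a) : b ≤ 2 * a + W / 2 ^ (L + 1) := by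
  classical
  have hb' := le_div_pow_dyadicScale (L := L) hb
  rw [h] at hb'
  have hpos : 0 ≤ W / 2 ^ (L + 1) := by positivity
  rcases Nat.find_spec (⟨L + 1, Or.inl rfl⟩ : ∃ j, j = L + 1 ∨ W / 2 ^ (j + 1) < a)
    with hj | hj
  · rw [dyadicScale, hj] at hb'
    linarith
  · rw [pow_succ, ← div_div] at hj
    unfold dyadicScale at hb'
    linarith

end DyadicScale

section NearestCenter

variable {ι E : Type*} [Fintype ι] [Nonempty ι] [NormedAddCommGroup E] (c : ι → E)

noncomputable def nearestCenter (x : E) : ι :=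
  (Finite.exists_min fun i => ‖x - c i‖).choose

lemma norm_sub_nearestCenter_le (x : E) (i : ι) : ‖x - c (nearestCenter c x)‖ ≤ ‖x - c i‖ :=
  (Finite.exists_min fun i => ‖x - c i‖).choose_spec i

noncomputable def sqDistNearest (x : E) : ℝ :=
  ‖x - c (nearestCenter c x)‖ ^ 2

lemma sqDistNearest_nonneg (x : E) : 0 ≤ sqDistNearest c x := sq_nonneg _

lemma sqDistNearest_le (x : E) (i : ι) : sqDistNearest c x ≤ ‖x - c i‖ ^ 2 := by
  unfold sqDistNearest; gcongr; exact norm_sub_nearestCenter_le c x i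

noncomputable def clusterKey (W : ℝ) (L : ℕ) (x : E) : ι × ℕ :=
  (nearestCenter c x, dyadicScale W L (sqDistNearest c x))

lemma clusterKey_mem (W : ℝ) (L : ℕ) (x : E) :
    clusterKey c W L x ∈ (Finset.univ : Finset ι) ×ˢ Finset.range (L + 2) := by
  simpa [clusterKey, Nat.lt_succ_iff] using dyadicScale_le

lemma norm_sub_sq_le_of_clusterKey_eq {W : ℝ} {L : ℕ} {u x : E} (hW : 0 ≤ W)
    (hu : sqDistNearest c u ≤ W) (h : clusterKey c W L u = clusterKey c W L x) :
    ‖x - u‖ ^ 2 ≤ 6 * sqDistNearest c x + 2 * (W / 2 ^ (L + 1)) := by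
  obtain ⟨hi, hj⟩ := Prod.mk.inj h
  have hux := le_two_mul_add_of_dyadicScale_eq hW (sqDistNearest_nonneg c x) hu hj
  have htri : ‖x - u‖ ≤ ‖x - c (nearestCenter c x)‖ + ‖u - c (nearestCenter c u)‖ := by
    simpa only [hi, dist_eq_norm] using dist_triangle_right x u (c (nearestCenter c x))
  calc ‖x - u‖ ^ 2 ≤ 2 * (sqDistNearest c x + sqDistNearest c u) :=
        (pow_le_pow_left₀ (norm_nonneg _) htri 2).trans add_sq_le
    _ ≤ 6 * sqDistNearest c x + 2 * (W / 2 ^ (L + 1)) := by linarith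

end NearestCenter

lemma sum_ofReal_six_mul_add_div_le {n L : ℕ} {W F : ℝ} (a : Fin n → ℝ) (ha : ∀ t, 0 ≤ a t)
    (hsum : ∑ t, a t ≤ W) (hn : n ≤ 2 ^ L) (hW : 0 ≤ W) (hF : 0 < F) :
    ∑ t, ENNReal.ofReal ((6 * a t + 2 * (W / 2 ^ (L + 1))) / F) ≤ ENNReal.ofReal (7 * W / F) := by
  rw [← ENNReal.ofReal_sum_of_nonneg fun t _ => by have := ha t; positivity, ← sum_div]
  gcongr
  have hsmall : n * (2 * (W / 2 ^ (L + 1))) ≤ W :=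
    calc n * (2 * (W / 2 ^ (L + 1))) = n / 2 ^ L * W := by rw [pow_succ]; field_simp
      _ ≤ 1 * W := by
        gcongr
        rw [div_le_one (by positivity)]
        exact_mod_cast hn
      _ = W := one_mul W
  rw [sum_add_distrib, ← mul_sum, sum_const, card_univ, Fintype.card_fin, nsmul_eq_mul]
  linarith

theorem expectedCenters_semiRun_le {ι : Type*} [Fintype ι] [Nonempty ι] {d n k : ℕ}
    (v : Fin n → Pt d) {wstar W : ℝ} (c : ι → Pt d) (L m : ℕ) (hn : 2 ≤ n) (hk : 0 < k)
    (hw : 0 < wstar) (hW : 0 ≤ W) (hcost : ∑ t, sqDistNearest c (v t) ≤ W)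
    (hnL : n ≤ 2 ^ L) (hWm : W ≤ 2 ^ m * wstar) :
    expectedCenters (semiRun k n wstar (List.ofFn v))
      ≤ ((Fintype.card ι * (L + 2) + ⌈3 * (k : ℝ) * (1 + Real.logb 2 n)⌉₊ * (m + 3) : ℕ) : ℝ≥0∞)
        + ENNReal.ofReal (k * Real.logb 2 n) := by
  classical
  have hlog : 0 < Real.logb 2 n := Real.logb_pos one_lt_two (by norm_cast)
  set f₁ := wstar / (k * Real.logb 2 n)
  have hf₁ : 0 < f₁ := by positivity
  have hQ : 0 < ⌈3 * (k : ℝ) * (1 + Real.logb 2 n)⌉₊ := Nat.ceil_pos.mpr (by positivity)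
  have hrun := tsum_foldlM_semiStep_mul_length_le (key := clusterKey c W L)
    (K := univ ×ˢ range (L + 2)) (r := m + 3) (S := {x | sqDistNearest c x ≤ W}) hf₁
    (Nat.le_ceil _) (fun x => 6 * sqDistNearest c x + 2 * (W / 2 ^ (L + 1))) (List.ofFn v)
    (fun x hx => by
      obtain ⟨t, rfl⟩ := List.mem_ofFn.mp hx
      exact (single_le_sum (fun t _ => sqDistNearest_nonneg c (v t)) (mem_univ t)).trans hcost)
    (fun x _ => clusterKey_mem c W L x)
    (fun u hu x _ h => norm_sub_sq_le_of_clusterKey_eq c hW hu h)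
    ⟨[], 0, f₁, 0⟩ ⟨⟨0, by simp⟩, hQ, by simp⟩
  rw [List.map_ofFn, List.sum_ofFn] at hrun
  have hpay : 7 * W / (f₁ * 2 ^ (m + 3)) ≤ k * Real.logb 2 n := by
    rw [div_le_iff₀ (by positivity)]
    calc 7 * W ≤ 8 * (2 ^ m * wstar) := by linarith
      _ = k * Real.logb 2 n * (f₁ * 2 ^ (m + 3)) := by simp only [f₁]; field_simp; ring
  refine hrun.trans (add_le_add ?_ ?_)
  · exact_mod_cast (centerPotential_le _).trans_eq (by simp)
  · exact (sum_ofReal_six_mul_add_div_le _ (fun t => sqDistNearest_nonneg c (v t)) hcost hnL hW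
      (by positivity)).trans (ENNReal.ofReal_le_ofReal hpay)

lemma Real.logb_two_le_one_add_logb_two {x y : ℝ} (hx : 0 < x) (h : x ≤ 2 * y) :
    Real.logb 2 x ≤ 1 + Real.logb 2 y := by
  rw [← Real.logb_self_eq_one one_lt_two, ← Real.logb_mul two_ne_zero (by linarith)]
  exact Real.logb_le_logb_of_le one_lt_two hx h

lemma exists_le_two_pow_lt_logb_add_one {x : ℝ} (hx : 1 ≤ x) :
    ∃ m : ℕ, x ≤ 2 ^ m ∧ (m : ℝ) < Real.logb 2 x + 1 := by
  refine ⟨⌈Real.logb 2 x⌉₊, ?_, Nat.ceil_lt_add_one (Real.logb_nonneg one_lt_two hx)⟩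
  calc x = 2 ^ Real.logb 2 x := (Real.rpow_logb two_pos (by norm_num) (by linarith)).symm
    _ ≤ 2 ^ (⌈Real.logb 2 x⌉₊ : ℝ) := Real.rpow_le_rpow_of_exponent_le one_le_two (Nat.le_ceil _)
    _ = 2 ^ ⌈Real.logb 2 x⌉₊ := Real.rpow_natCast 2 _

lemma exists_clustering_le_two_mul_kMeansOpt {d k n : ℕ} {v : Fin n → Pt d}
    (hopt : 0 < kMeansOpt k v) :
    ∃ (σ : Fin n → Fin k) (c : Fin k → Pt d), kMeansOpt k v ≤ ∑ t, ‖v t - c (σ t)‖ ^ 2 ∧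
      ∑ t, ‖v t - c (σ t)‖ ^ 2 ≤ 2 * kMeansOpt k v := by
  set costs := {w | ∃ (σ : Fin n → Fin k) (c : Fin k → Pt d), w = ∑ t, ‖v t - c (σ t)‖ ^ 2}
  have hbdd : BddBelow costs := ⟨0, fun _ ⟨_, _, hw⟩ => hw ▸ sum_nonneg fun _ _ => sq_nonneg _⟩
  have hne : costs.Nonempty := by
    by_contra h
    rw [Set.not_nonempty_iff_eq_empty] at h
    simp [kMeansOpt, costs, h] at hopt
  change 0 < sInf costs at hopt
  obtain ⟨_, ⟨σ, c, rfl⟩, hlt⟩ :=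
    exists_lt_of_csInf_lt hne (by linarith : sInf costs < 2 * sInf costs)
  exact ⟨σ, c, csInf_le hbdd ⟨σ, c, rfl⟩, hlt.le⟩

lemma centers_count_le {k lb P : ℝ} {L QC m : ℕ} (hk : 1 ≤ k) (hlb : 1 ≤ lb) (hP : 0 ≤ P)
    (hL : L < lb + 1) (hQC : QC < 3 * k * (1 + lb) + 1) (hm : m < P + 2) :
    k * (L + 2) + QC * (m + 3) + k * lb ≤ 24 * k * (1 + lb) * (1 + P) := by
  have hX : 1 ≤ k * (1 + lb) := by nlinarith
  have hQC' : QC ≤ 4 * (k * (1 + lb)) := by linarith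
  nlinarith [mul_le_mul hQC' (by linarith : m + 3 ≤ 5 * (1 + P)) (by linarith) (by positivity),
    mul_le_mul_of_nonneg_left hP (by positivity : 0 ≤ k * (1 + lb)),
    mul_le_mul_of_nonneg_left hL.le (by positivity : (0:ℝ) ≤ k)]

/-- There is a universal constant `c₀` such that for every dimension `d`,
stream `v 0, …, v (n-1)` in `ℝ^d` with `n ≥ 2`, every `k ≥ 1` and every `w*` with
`0 < w* ≤ W*` (where `W*` is the optimal `k`-means cost of the stream), the expected
number of centers produced by the semi-online `k`-means algorithm is at most
`c₀ · k · (1 + log₂ n) · (1 + log₂(W*/w*))`. -/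
theorem semiOnline_expected_number_of_centers :
    ∃ c₀ : ℝ, 0 < c₀ ∧
      ∀ (d n k : ℕ) (v : Fin n → Pt d) (wstar : ℝ),
        2 ≤ n → 1 ≤ k → 0 < wstar → wstar ≤ kMeansOpt k v →
        expectedCenters (semiRun k n wstar (List.ofFn v)) ≤
          ENNReal.ofReal (c₀ * k * (1 + Real.logb 2 n) *
            (1 + Real.logb 2 (kMeansOpt k v / wstar))) := by
  refine ⟨24, by norm_num, fun d n k v wstar hn hk hw hwle => ?_⟩
  have : Nonempty (Fin k) := ⟨⟨0, hk⟩⟩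
  have hopt : 0 < kMeansOpt k v := hw.trans_le hwle
  obtain ⟨σ, c, hWopt, hW2⟩ := exists_clustering_le_two_mul_kMeansOpt hopt
  set W := ∑ t, ‖v t - c (σ t)‖ ^ 2
  have hlb : 1 ≤ Real.logb 2 n := by
    rw [Real.le_logb_iff_rpow_le one_lt_two (by positivity)]; norm_num; exact_mod_cast hn
  obtain ⟨L, hnL, hL⟩ := exists_le_two_pow_lt_logb_add_one (x := n) (by norm_cast; omega)
  obtain ⟨m, hWm, hm⟩ :=
    exists_le_two_pow_lt_logb_add_one ((one_le_div hw).mpr (hwle.trans hWopt))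
  have hlogW := Real.logb_two_le_one_add_logb_two (div_pos (hopt.trans_le hWopt) hw)
    (by rw [mul_div_assoc']; gcongr : W / wstar ≤ 2 * (kMeansOpt k v / wstar))
  have hQC := Nat.ceil_lt_add_one (by positivity : 0 ≤ 3 * (k : ℝ) * (1 + Real.logb 2 n))
  refine (expectedCenters_semiRun_le v c L m hn hk hw (hopt.le.trans hWopt)
    (sum_le_sum fun t _ => sqDistNearest_le c (v t) (σ t)) (by exact_mod_cast hnL)
    ((div_le_iff₀ hw).mp hWm)).trans ?_
  rw [← ENNReal.ofReal_natCast, ← ENNReal.ofReal_add (by positivity) (by positivity)]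
  refine ENNReal.ofReal_le_ofReal ?_
  push_cast [Fintype.card_fin]
  exact centers_count_le (by exact_mod_cast hk) hlb
    (Real.logb_nonneg one_lt_two ((one_le_div hw).mpr hwle)) hL hQC (by linarith)
end

section
/- Let X_1,…,X_n be independent Bernoulli random variables (experiments), where X_i succeeds with probability p_i, and suppose there are reals B > 0 and A_1,…,A_n ≥ 0 such that p_i ≥ min(A_i/B, 1) for every i. Let t be the random number of initial consecutive failures, i.e. the largest t ∈ {0,1,…,n} such that X_1,…,X_t all fail. Then E[∑_{i=1}^{t} A_i] ≤ B. -/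
/-!
Let `D m` be the probability that the first `m` experiments all fail, so the expectation is
`∑ⱼ A j * D (j + 1)`. By independence `D (j + 1) = (1 - rⱼ) * D j`, where `rⱼ ≥ min (A j / B) 1` is
the success probability of experiment `j`; this gives `A j * D (j + 1) ≤ B * rⱼ * D j =
B * (D j - D (j + 1))`, and the right-hand sides telescope to `B * (D 0 - D n) ≤ B`.
-/

open Finset MeasureTheory ProbabilityTheory

lemma mul_one_sub_le_mul_of_min_div_le {A B p : ℝ} (hB : 0 < B) (hp₀ : 0 ≤ p) (hp₁ : p ≤ 1)
    (h : min (A / B) 1 ≤ p) : A * (1 - p) ≤ B * p := by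
  rcases le_total (A / B) 1 with hAB | hAB
  · rw [min_eq_left hAB, div_le_iff₀ hB] at h
    rcases le_total A 0 with hA | hA <;> nlinarith
  · rw [min_eq_right hAB] at h
    rw [le_antisymm hp₁ h]
    linarith

lemma Fin.sum_mul_succ_le_of_le_mul_sub {n : ℕ} {A : Fin n → ℝ} {D : ℕ → ℝ} {B : ℝ}
    (h : ∀ j : Fin n, A j * D (j + 1) ≤ B * (D j - D (j + 1))) :
    ∑ j, A j * D (j + 1) ≤ B * (D 0 - D n) :=
  calc ∑ j, A j * D (j + 1) ≤ ∑ j : Fin n, B * (D j - D (j + 1)) := sum_le_sum fun j _ => h j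
    _ = B * (D 0 - D n) := by
      rw [← mul_sum, Fin.sum_univ_eq_sum_range (fun i => D i - D (i + 1)), sum_range_sub']

lemma Nat.lt_findGreatest_iff_of_antitone {P : ℕ → Prop} [DecidablePred P] (hP : Antitone P)
    {k n : ℕ} (hk : k < n) : k < Nat.findGreatest P n ↔ P (k + 1) :=
  ⟨fun h => hP h (Nat.findGreatest_of_ne_zero rfl (by omega)), fun h => Nat.le_findGreatest hk h⟩

section Experiments

variable {Ω : Type*} {n : ℕ} (X : Fin n → Ω → Bool)

def allFailBefore (m : ℕ) : Set Ω := {ω | ∀ k : Fin n, (k : ℕ) < m → X k ω = false}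

lemma allFailBefore_eq_biInter (m : ℕ) :
    allFailBefore X m = ⋂ k ∈ univ.filter (fun k : Fin n => (k : ℕ) < m), X k ⁻¹' {false} := by
  ext ω; simp [allFailBefore]

variable {X} [MeasurableSpace Ω]

lemma measurableSet_allFailBefore (hX : ∀ i, Measurable (X i)) (m : ℕ) :
    MeasurableSet (allFailBefore X m) := by
  rw [allFailBefore_eq_biInter]
  exact .biInter (Set.toFinite _).countable fun k _ => hX k (measurableSet_singleton false)

lemma measureReal_allFailBefore_succ (P : Measure Ω) [IsProbabilityMeasure P]
    (hX : ∀ i, Measurable (X i)) (hindep : iIndepFun X P) (j : Fin n) :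
    P.real (allFailBefore X (j + 1)) =
      P.real (allFailBefore X j) * (1 - P.real {ω | X j ω = true}) := by
  have hprod (m : ℕ) : P.real (allFailBefore X m) =
      ∏ k ∈ univ.filter (fun k : Fin n => (k : ℕ) < m), P.real (X k ⁻¹' {false}) := by
    rw [allFailBefore_eq_biInter, measureReal_def, hindep.measure_inter_preimage_eq_mul _
      (sets := fun _ => {false}) fun _ _ => measurableSet_singleton false, ENNReal.toReal_prod]
    rfl
  have hinsert : univ.filter (fun k : Fin n => (k : ℕ) < j + 1) =
      insert j (univ.filter (fun k : Fin n => (k : ℕ) < j)) := by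
    ext k; simp [le_iff_eq_or_lt, Fin.val_inj]
  have hfail : X j ⁻¹' {false} = {ω | X j ω = true}ᶜ := by ext ω; simp
  rw [hprod, hprod, hinsert, prod_insert (by simp), hfail, mul_comm,
    probReal_compl_eq_one_sub (s := {ω | X j ω = true}) (hX j (measurableSet_singleton true))]

lemma integral_sum_ite_lt_findGreatest_eq (P : Measure Ω) [IsFiniteMeasure P]
    (hX : ∀ i, Measurable (X i)) (A : Fin n → ℝ) :
    ∫ ω, (∑ j : Fin n,
        if (j : ℕ) < Nat.findGreatest
            (fun t => ∀ j : Fin n, (j : ℕ) < t → X j ω = false) n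
        then A j else 0) ∂P = ∑ j, A j * P.real (allFailBefore X (j + 1)) := by
  classical
  have hindicator (ω : Ω) (j : Fin n) :
      (if (j : ℕ) < Nat.findGreatest (fun t => ∀ j : Fin n, (j : ℕ) < t → X j ω = false) n
        then A j else 0) = (allFailBefore X (j + 1)).indicator (fun _ => A j) ω := by
    have hanti : Antitone fun t => ∀ j : Fin n, (j : ℕ) < t → X j ω = false :=
      fun _ _ hab h k hk => h k (hk.trans_le hab)
    rw [Set.indicator_apply]
    exact if_congr (Nat.lt_findGreatest_iff_of_antitone hanti j.isLt) rfl rfl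
  simp_rw [hindicator]
  rw [integral_finsetSum _ fun j _ =>
    (integrable_const (A j)).indicator (measurableSet_allFailBefore hX _)]
  simp_rw [integral_indicator_const _ (measurableSet_allFailBefore hX _), smul_eq_mul, mul_comm]

end Experiments

theorem sum_until_first_success_le_general {Ω : Type*} [MeasurableSpace Ω]
    (P : Measure Ω) [IsProbabilityMeasure P]
    (n : ℕ) (X : Fin n → Ω → Bool) (p A : Fin n → ℝ) (B : ℝ)
    (hB : 0 < B)
    (hmeas : ∀ i, Measurable (X i))
    (hindep : ProbabilityTheory.iIndepFun X P)
    (hp : ∀ i, P {ω | X i ω = true} = ENNReal.ofReal (p i))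
    (hpb : ∀ i, min (A i / B) 1 ≤ p i) :
    ∫ ω, (∑ j : Fin n,
        if (j : ℕ) < Nat.findGreatest
            (fun t => ∀ j : Fin n, (j : ℕ) < t → X j ω = false) n
        then A j else 0) ∂P ≤ B := by
  set D : ℕ → ℝ := fun m => P.real (allFailBefore X m)
  have hstep (j : Fin n) : A j * D (j + 1) ≤ B * (D j - D (j + 1)) := by
    set r := P.real {ω | X j ω = true}
    -- `r = max (p j) 0`, since `ENNReal.ofReal` truncates negative reals
    have hpr : p j ≤ r := by
      simp only [r, measureReal_def, hp, ENNReal.toReal_ofReal']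
      exact le_max_left _ _
    have hr := mul_one_sub_le_mul_of_min_div_le (A := A j) hB measureReal_nonneg
      measureReal_le_one ((hpb j).trans hpr)
    have hD : 0 ≤ D j := measureReal_nonneg
    simp only [D, measureReal_allFailBefore_succ P hmeas hindep j]
    nlinarith
  calc _ = ∑ j, A j * D (j + 1) := integral_sum_ite_lt_findGreatest_eq P hmeas A
    _ ≤ B * (D 0 - D n) := Fin.sum_mul_succ_le_of_le_mul_sub hstep
    _ ≤ B := mul_le_of_le_one_right hB.le <| by
      linarith [show D 0 ≤ 1 from measureReal_le_one, show 0 ≤ D n from measureReal_nonneg]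

/-- Let `X 0, …, X (n-1)` be independent Bernoulli experiments, with
`P(X i = true) = p i ≥ min(A i / B, 1)` where `B > 0` and `A i ≥ 0`. Let
`t ω` be the number of initial consecutive failures, i.e. the largest `t ≤ n` such
that `X 0, …, X (t-1)` all fail at `ω`. Then `E[∑_{i<t} A i] ≤ B`. -/
theorem sum_until_first_success_le {Ω : Type*} [MeasurableSpace Ω]
    (P : Measure Ω) [IsProbabilityMeasure P]
    (n : ℕ) (X : Fin n → Ω → Bool) (p A : Fin n → ℝ) (B : ℝ)
    (hB : 0 < B) (hA : ∀ i, 0 ≤ A i)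
    (hmeas : ∀ i, Measurable (X i))
    (hindep : ProbabilityTheory.iIndepFun X P)
    (hp : ∀ i, P {ω | X i ω = true} = ENNReal.ofReal (p i))
    (hpb : ∀ i, min (A i / B) 1 ≤ p i) :
    ∫ ω, (∑ j : Fin n,
        if (j : ℕ) < Nat.findGreatest
            (fun t => ∀ j : Fin n, (j : ℕ) < t → X j ω = false) n
        then A j else 0) ∂P ≤ B :=
  sum_until_first_success_le_general P n X p A B hB hmeas hindep hp hpb
end

section
/- No online clustering algorithm with 2 clusters has a bounded competitive ratio for the 2-means objective, even for points on the real line: for every online assignment rule a (a function assigning to each nonempty finite sequence (v_1,…,v_t) of reals a label a(v_1,…,v_t) ∈ {1,2}, interpreted as the cluster of v_t given the prefix) and every M > 0, there exists a sequence v_1,…,v_n of at most 3 reals such that cost_a(v_1,…,v_n) > M · W*, where W* is the optimal 2-means cost of {v_1,…,v_n}. -/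
/-- The cost of the online assignment rule `a` on the input sequence `v`:
the label of `v i` is `a` applied to the prefix `(v 0, …, v i)`, the induced clusters
are the fibers of the labels, and each cluster pays the minimum over real centers of
the sum of squared distances of its points to the center. -/
noncomputable def onlineCost (a : List ℝ → Fin 2) {n : ℕ} (v : Fin n → ℝ) : ℝ :=
  ∑ j : Fin 2, sInf {w | ∃ c : ℝ,
    w = ∑ i ∈ Finset.univ.filter
        (fun i : Fin n => a ((List.ofFn v).take ((i : ℕ) + 1)) = j),
      (v i - c) ^ 2}

/-- The optimal 2-means cost of the multiset `v 0, …, v (n-1)` of reals. -/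
noncomputable def optTwoMeans {n : ℕ} (v : Fin n → ℝ) : ℝ :=
  sInf {w | ∃ (σ : Fin n → Fin 2) (c : Fin 2 → ℝ),
    w = ∑ i, (v i - c (σ i)) ^ 2}

/-!
Feed the points `0, 1`. If the rule puts them in one cluster, that cluster costs `1/2` while two
points have optimal 2-means cost `0`. Otherwise feed a third point `T` far away: it must join the
cluster of `0` or of `1`, which then costs at least `(T - 1)² / 2`, while clustering `{0, 1}`
and `{T}` costs only `1/2`.
-/

open Finset

noncomputable def clusterCost {ι : Type*} (s : Finset ι) (f : ι → ℝ) : ℝ :=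
  sInf {w | ∃ c : ℝ, w = ∑ i ∈ s, (f i - c) ^ 2}

def onlineLabel (a : List ℝ → Fin 2) {n : ℕ} (v : Fin n → ℝ) (i : Fin n) : Fin 2 :=
  a ((List.ofFn v).take ((i : ℕ) + 1))

theorem onlineCost_eq_sum_clusterCost (a : List ℝ → Fin 2) {n : ℕ} (v : Fin n → ℝ) :
    onlineCost a v = ∑ j : Fin 2, clusterCost {i | onlineLabel a v i = j} v :=
  rfl

theorem half_sq_sub_le_sq_sub_add_sq_sub (x y c : ℝ) :
    (x - y) ^ 2 / 2 ≤ (x - c) ^ 2 + (y - c) ^ 2 := by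
  nlinarith [sq_nonneg (x + y - 2 * c)]

section clusterCost

variable {ι : Type*} (s : Finset ι) (f : ι → ℝ)

theorem clusterCost_nonneg : 0 ≤ clusterCost s f :=
  le_csInf ⟨_, 0, rfl⟩ (by rintro w ⟨c, rfl⟩; positivity)

theorem half_sq_sub_le_clusterCost {i k : ι} (hi : i ∈ s) (hk : k ∈ s) (hik : i ≠ k) :
    (f i - f k) ^ 2 / 2 ≤ clusterCost s f := by
  classical
  refine le_csInf ⟨_, 0, rfl⟩ ?_
  rintro w ⟨c, rfl⟩
  calc (f i - f k) ^ 2 / 2 ≤ (f i - c) ^ 2 + (f k - c) ^ 2 :=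
        half_sq_sub_le_sq_sub_add_sq_sub _ _ _
    _ = ∑ j ∈ {i, k}, (f j - c) ^ 2 := by rw [sum_pair hik]
    _ ≤ ∑ j ∈ s, (f j - c) ^ 2 :=
        sum_le_sum_of_subset_of_nonneg (by simp [insert_subset_iff, hi, hk])
          (fun _ _ _ => sq_nonneg _)

end clusterCost

theorem half_sq_sub_le_onlineCost (a : List ℝ → Fin 2) {n : ℕ} (v : Fin n → ℝ) {i k : Fin n}
    (hik : i ≠ k) (hlabel : onlineLabel a v i = onlineLabel a v k) :
    (v i - v k) ^ 2 / 2 ≤ onlineCost a v := by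
  rw [onlineCost_eq_sum_clusterCost]
  calc (v i - v k) ^ 2 / 2
        ≤ clusterCost ({l | onlineLabel a v l = onlineLabel a v i} : Finset (Fin n)) v :=
        half_sq_sub_le_clusterCost _ _ (by simp) (by simp [hlabel]) hik
    _ ≤ ∑ j : Fin 2, clusterCost {l | onlineLabel a v l = j} v :=
        single_le_sum (f := fun j => clusterCost {l | onlineLabel a v l = j} v)
          (fun j _ => clusterCost_nonneg _ _) (mem_univ _)

theorem optTwoMeans_le {n : ℕ} (v : Fin n → ℝ) (σ : Fin n → Fin 2) (c : Fin 2 → ℝ) :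
    optTwoMeans v ≤ ∑ i, (v i - c (σ i)) ^ 2 :=
  csInf_le ⟨0, by rintro w ⟨σ, c, rfl⟩; positivity⟩ ⟨σ, c, rfl⟩

theorem optTwoMeans_nonneg {n : ℕ} (v : Fin n → ℝ) : 0 ≤ optTwoMeans v :=
  le_csInf ⟨_, fun _ => 0, 0, rfl⟩ (by rintro w ⟨σ, c, rfl⟩; positivity)

theorem optTwoMeans_pair (x y : ℝ) : optTwoMeans ![x, y] = 0 :=
  le_antisymm (by simpa [Fin.sum_univ_two] using optTwoMeans_le ![x, y] id ![x, y])
    (optTwoMeans_nonneg _)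

theorem optTwoMeans_triple_le (x y z : ℝ) : optTwoMeans ![x, y, z] ≤ (x - y) ^ 2 / 2 := by
  refine (optTwoMeans_le ![x, y, z] ![0, 0, 1] ![(x + y) / 2, z]).trans_eq ?_
  simp [Fin.sum_univ_three]
  ring

/-- No online clustering algorithm with 2 clusters has a bounded
competitive ratio for the 2-means objective, even on the real line: for every online
assignment rule `a` and every `M > 0` there is a sequence of at most 3 reals on which
the online cost exceeds `M` times the optimal 2-means cost. -/
theorem online_two_means_unbounded_ratio (a : List ℝ → Fin 2) (M : ℝ) (hM : 0 < M) :
    ∃ (n : ℕ) (v : Fin n → ℝ), n ≤ 3 ∧ M * optTwoMeans v < onlineCost a v := by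
  by_cases h01 : a [0] = a [0, 1]
  · refine ⟨2, ![0, 1], by norm_num, ?_⟩
    have hcost := half_sq_sub_le_onlineCost a ![0, 1] (i := 0) (k := 1) (by decide)
      (by simpa [onlineLabel] using h01)
    rw [optTwoMeans_pair]
    norm_num at hcost ⊢
    linarith
  · refine ⟨3, ![0, 1, M + 2], le_rfl, ?_⟩
    have hcost : (M + 1) ^ 2 / 2 ≤ onlineCost a ![0, 1, M + 2] := by
      obtain h20 | h21 : a [0, 1, M + 2] = a [0] ∨ a [0, 1, M + 2] = a [0, 1] := by grind
      · have := half_sq_sub_le_onlineCost a ![0, 1, M + 2] (i := 2) (k := 0) (by decide)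
          (by simpa [onlineLabel] using h20)
        simp at this
        nlinarith
      · have := half_sq_sub_le_onlineCost a ![0, 1, M + 2] (i := 2) (k := 1) (by decide)
          (by simpa [onlineLabel] using h21)
        simp at this
        linarith
    calc M * optTwoMeans ![0, 1, M + 2] ≤ M * (1 / 2) := by
          gcongr
          simpa using optTwoMeans_triple_le 0 1 (M + 2)
      _ < (M + 1) ^ 2 / 2 := by nlinarith
      _ ≤ onlineCost a ![0, 1, M + 2] := hcost
end
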